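/- Let f be a C² functional on a Hilbert space X, η its normalized steepest descent flow, x̄ a strict local minimizer, and γ : [0,1] → f^c a path with ω_{γ(s)} = {x̄} for every s ∈ [0,1]. Define the descending loop γ_η := [(-α_{γ(0)}) ∘ γ] ∘ α_{γ(1)}, where α_x is the descending path associated to x and (-α)(s) = α(1-s). Then γ_η is contractible in f^c: there exists a continuous h : [0,1] × [0,1] → f^c with h(0,·) = γ_η, h(1,·) ≡ x̄, and h(λ,0) = h(λ,1) for all λ. -/

import Mathlib

/-!
The normalized field `-∇f / (1 + ‖∇f‖)` is bounded by `1` and, for `f ∈ C²`, locally Lipschitz,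
hence uniformly Lipschitz on a tube around a compact arc of a flow line. Grönwall's inequality then
makes `η` continuous in the initial point, and being `1`-Lipschitz in time it is jointly continuous
on `[0, ∞) × X`. Flow lines are connected and `f` decreases along them, so `S` and `F` are forward
invariant; as every `γ s` enters the open set `F`, compactness of `γ [0, 1]` gives a common entry
time `M`. The contraction lengthens the flow part of all descending paths (by `2 l M` at stage
`l`) and then shrinks them to `x̄`: a segment to `x̄` is only started from a point of
`closure F ⊆ closedBall x̄ r`, so apart from its start it runs inside `ball x̄ r ⊆ S`.
-/

open Filter Topology Metric Set

variable {X : Type*} [NormedAddCommGroup X] [InnerProductSpace ℝ X] [CompleteSpace X]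

/-- The normalized steepest descent flow of `f`:
`η(0,x) = x` and `dη/dt = -∇f(η)/(1+‖∇f(η)‖)`. -/
def IsNSDFlow (f : X → ℝ) (η : ℝ → X → X) : Prop :=
  (∀ x, η 0 x = x) ∧
  ∀ x t, HasDerivAt (fun s => η s x)
    (-((1 + ‖gradient f (η t x)‖)⁻¹ • gradient f (η t x))) t

/-- The ω-limit set of `x` for the flow `η`. -/
def omegaLim (η : ℝ → X → X) (x : X) : Set X :=
  {y | ∃ t : ℕ → ℝ, Tendsto t atTop atTop ∧ Tendsto (fun n => η (t n) x) atTop (𝓝 y)}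

/-- `x₀` is a strict local minimizer of `f`. -/
def StrictLocalMin (f : X → ℝ) (x₀ : X) : Prop :=
  ∃ r₀ > 0, ∀ r : ℝ, 0 < r → r < r₀ → ∃ ε > 0, ∀ y ∈ Metric.sphere x₀ r, f x₀ + ε ≤ f y

/-- The loop `γ : [0,1] → X` is contractible within the set `S`. -/
def LoopContractibleIn (S : Set X) (γ : ℝ → X) : Prop :=
  ∃ (h : ℝ → ℝ → X) (x₀ : X),
    ContinuousOn (fun p : ℝ × ℝ => h p.1 p.2) (Icc 0 1 ×ˢ Icc 0 1) ∧
    (∀ l ∈ Icc (0:ℝ) 1, ∀ s ∈ Icc (0:ℝ) 1, h l s ∈ S) ∧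
    (∀ s ∈ Icc (0:ℝ) 1, h 0 s = γ s) ∧
    (∀ s ∈ Icc (0:ℝ) 1, h 1 s = x₀) ∧
    ∀ l ∈ Icc (0:ℝ) 1, h l 0 = h l 1

/-- A subset `S` is simply connected: every loop in `S` is contractible in `S`. -/
def SimplyConnIn (S : Set X) : Prop :=
  ∀ γ : ℝ → X, ContinuousOn γ (Icc 0 1) → (∀ s ∈ Icc (0:ℝ) 1, γ s ∈ S) →
    γ 0 = γ 1 → LoopContractibleIn S γ

open scoped NNReal

section LipschitzODE

variable {E : Type*} [NormedAddCommGroup E] [NormedSpace ℝ E]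

theorem lipschitzWith_inv_one_add_norm_smul :
    LipschitzWith 2 (fun a : E => (1 + ‖a‖)⁻¹ • a) := by
  refine LipschitzWith.of_dist_le_mul fun a b => ?_
  simp only [dist_eq_norm, NNReal.coe_ofNat]
  have ha : 0 < 1 + ‖a‖ := by positivity
  have hab : 0 < (1 + ‖a‖) * (1 + ‖b‖) := by positivity
  have hcoef : (1 + ‖a‖)⁻¹ - (1 + ‖b‖)⁻¹ = (‖b‖ - ‖a‖) / ((1 + ‖a‖) * (1 + ‖b‖)) := by
    field_simp
    ring
  have hsplit : (1 + ‖a‖)⁻¹ • a - (1 + ‖b‖)⁻¹ • b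
      = (1 + ‖a‖)⁻¹ • (a - b) + ((‖b‖ - ‖a‖) / ((1 + ‖a‖) * (1 + ‖b‖))) • b := by
    rw [← hcoef, smul_sub, sub_smul]
    abel
  have h₁ : ‖(1 + ‖a‖)⁻¹ • (a - b)‖ ≤ ‖a - b‖ := by
    rw [norm_smul, norm_inv, Real.norm_of_nonneg ha.le, inv_mul_le_iff₀ ha]
    nlinarith [norm_nonneg a, norm_nonneg (a - b)]
  have h₂ : ‖((‖b‖ - ‖a‖) / ((1 + ‖a‖) * (1 + ‖b‖))) • b‖ ≤ ‖a - b‖ := by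
    rw [norm_smul, Real.norm_eq_abs, abs_div, abs_of_pos hab, div_mul_eq_mul_div,
      div_le_iff₀ hab]
    have := mul_le_mul_of_nonneg_right
      ((abs_norm_sub_norm_le b a).trans_eq (norm_sub_rev b a)) (norm_nonneg b)
    nlinarith [norm_nonneg (a - b), mul_nonneg (norm_nonneg (a - b)) (norm_nonneg a),
      mul_nonneg (mul_nonneg (norm_nonneg (a - b)) (norm_nonneg a)) (norm_nonneg b)]
  calc _ ≤ _ := hsplit ▸ norm_add_le _ _
    _ ≤ 2 * ‖a - b‖ := by linarith

theorem LocallyLipschitz.exists_lipschitzOnWith_ball_of_isCompact {α β : Type*}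
    [PseudoMetricSpace α] [PseudoEMetricSpace β] {f : α → β} (hf : LocallyLipschitz f)
    {K : Set α} (hK : IsCompact K) :
    ∃ δ > 0, ∃ L, ∀ q ∈ K, LipschitzOnWith L f (ball q δ) := by
  choose L U hU hLU using hf
  obtain ⟨P, -, hcover⟩ := hK.elim_nhds_subcover (fun x => interior (U x))
    fun x _ => interior_mem_nhds.2 (hU x)
  obtain ⟨δ, hδ, hball⟩ := lebesgue_number_lemma_of_metric_sUnion hK
    (c := (fun x => interior (U x)) '' P) (by simp) (by rwa [sUnion_image])
  refine ⟨δ, hδ, P.sup L, fun q hq => ?_⟩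
  obtain ⟨_, ⟨x, hx, rfl⟩, hqx⟩ := hball q hq
  exact ((hLU x).mono (hqx.trans interior_subset)).weaken (Finset.le_sup hx)

/-- The condition `ρ eᴸ⁽ᵇ⁻ᵃ⁾ < δ` keeps `f` inside the `δ`-tube around `g`, where the Lipschitz
bound is available, so Grönwall's inequality applies on all of `[a, b]`. -/
theorem dist_le_of_trajectories_of_lipschitzOnWith_ball {v : E → E} {f g : ℝ → E} {L : ℝ≥0}
    {a b δ ρ : ℝ} (hv : ∀ t ∈ Ico a b, LipschitzOnWith L v (ball (g t) δ))
    (hf : ∀ t, HasDerivAt f (v (f t)) t) (hg : ∀ t, HasDerivAt g (v (g t)) t)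
    (ha : dist (f a) (g a) ≤ ρ) (hρ : ρ * Real.exp (L * (b - a)) < δ) :
    ∀ t ∈ Icc a b, dist (f t) (g t) ≤ ρ * Real.exp (L * (t - a)) := by
  have hfc : Continuous f := continuous_iff_continuousAt.2 fun t => (hf t).continuousAt
  have hgc : Continuous g := continuous_iff_continuousAt.2 fun t => (hg t).continuousAt
  have hδ : 0 < δ := lt_of_le_of_lt (by positivity [dist_nonneg.trans ha]) hρ
  have gronwall : ∀ c ≤ b, (∀ u ∈ Ico a c, dist (f u) (g u) < δ) →
      ∀ t ∈ Icc a c, dist (f t) (g t) ≤ ρ * Real.exp (L * (t - a)) := fun c hc hclose =>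
    dist_le_of_trajectories_ODE_of_mem (v := fun _ => v) (s := fun t => ball (g t) δ)
      (fun t ht => hv t ⟨ht.1, ht.2.trans_le hc⟩) hfc.continuousOn
      (fun t _ => (hf t).hasDerivWithinAt) (fun t ht => mem_ball.2 (hclose t ht))
      hgc.continuousOn (fun t _ => (hg t).hasDerivWithinAt) (fun t _ => mem_ball_self hδ) ha
  have hexp : ∀ t ≤ b, ρ * Real.exp (L * (t - a)) < δ := fun t ht =>
    lt_of_le_of_lt (by gcongr; positivity [dist_nonneg.trans ha]) hρ
  suffices hstay : ∀ u ∈ Icc a b, dist (f u) (g u) < δ from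
    gronwall b le_rfl fun u hu => hstay u (Ico_subset_Icc_self hu)
  by_contra! ⟨u, hu, hδu⟩
  set exits := {t ∈ Icc a b | δ ≤ dist (f t) (g t)}
  have hclosed : IsClosed exits := isClosed_Icc.inter (isClosed_le continuous_const (hfc.dist hgc))
  have hbdd : BddBelow exits := ⟨a, fun t ht => ht.1.1⟩
  have hτ := hclosed.csInf_mem ⟨u, hu, hδu⟩ hbdd
  have hbefore : ∀ t ∈ Ico a (sInf exits), dist (f t) (g t) < δ := fun t ht =>
    not_le.1 fun h => (csInf_le hbdd ⟨⟨ht.1, ht.2.le.trans hτ.1.2⟩, h⟩).not_gt ht.2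
  have := gronwall _ hτ.1.2 hbefore _ ⟨hτ.1.1, le_rfl⟩
  linarith [hτ.2, hexp _ hτ.1.2]

end LipschitzODE

section EntryTime

theorem exists_nonneg_mem_of_mem_omegaLim {Y : Type*} [NormedAddCommGroup Y] {φ : ℝ → Y → Y}
    {x y : Y} (hy : y ∈ omegaLim φ x) {U : Set Y} (hU : U ∈ 𝓝 y) :
    ∃ t, 0 ≤ t ∧ φ t x ∈ U := by
  obtain ⟨t, ht, hconv⟩ := hy
  obtain ⟨n, hnU, hn⟩ := ((hconv.eventually_mem hU).and (ht.eventually_ge_atTop 0)).exists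
  exact ⟨t n, hn, hnU⟩

theorem exists_nonneg_mem_sublevel_component {Y : Type*} [NormedAddCommGroup Y] [NormedSpace ℝ Y]
    {f : Y → ℝ} (hf : Continuous f) {φ : ℝ → Y → Y} {p x : Y} {ε : ℝ} (hε : 0 < ε)
    (hx : p ∈ omegaLim φ x) : ∃ t, 0 ≤ t ∧ φ t x ∈ connectedComponentIn {z | f z < f p + ε} p :=
  exists_nonneg_mem_of_mem_omegaLim hx <|
    (isOpen_lt hf continuous_const).connectedComponentIn.mem_nhds
      (mem_connectedComponentIn (by simpa using hε))

variable {Y : Type*} [TopologicalSpace Y] {U : Set Y}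

theorem Continuous.mem_closure_of_sInf_entry_le {c : ℝ → Y} (hc : Continuous c)
    (hinv : ∀ t₀ t₁, t₀ ≤ t₁ → c t₀ ∈ U → c t₁ ∈ U) (hne : ∃ t, 0 ≤ t ∧ c t ∈ U) {τ : ℝ}
    (hτ : sInf {t | 0 ≤ t ∧ c t ∈ U} ≤ τ) : c τ ∈ closure U := by
  refine map_mem_closure hc (by rwa [closure_Ioi]) fun t ht => ?_
  obtain ⟨t', ht', ht't⟩ := exists_lt_of_csInf_lt hne ht
  exact hinv t' t ht't.le ht'.2

theorem IsCompact.exists_entry_time {φ : ℝ → Y → Y} {K : Set Y} (hK : IsCompact K)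
    (hU : IsOpen U) (hφ : ∀ t, 0 ≤ t → Continuous (φ t))
    (hinv : ∀ x t₀ t₁, t₀ ≤ t₁ → φ t₀ x ∈ U → φ t₁ x ∈ U)
    (hentry : ∀ x ∈ K, ∃ t, 0 ≤ t ∧ φ t x ∈ U) : ∃ M, 0 ≤ M ∧ ∀ x ∈ K, φ M x ∈ U := by
  choose! t ht₀ htU using hentry
  obtain ⟨P, hPK, hcover⟩ := hK.elim_nhds_subcover (fun x => φ (t x) ⁻¹' U)
    fun x hx => ((hU.preimage (hφ _ (ht₀ x hx))).mem_nhds (htU x hx))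
  obtain ⟨M, hM⟩ := (P.image t).bddAbove
  refine ⟨max M 0, le_max_right _ _, fun y hy => ?_⟩
  obtain ⟨x, hxP, hyx⟩ := mem_iUnion₂.1 (hcover hy)
  exact hinv y _ _ ((hM (Finset.mem_coe.2 (Finset.mem_image_of_mem t hxP))).trans
    (le_max_left _ _)) hyx

end EntryTime

section Flow

/-- `IsNSDFlow f η` says that each `η · x` solves `x' = nsdField f x`. -/
noncomputable def nsdField (f : X → ℝ) (z : X) : X := -((1 + ‖gradient f z‖)⁻¹ • gradient f z)

variable {f : X → ℝ} {η : ℝ → X → X}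

theorem norm_nsdField_le (f : X → ℝ) (z : X) : ‖nsdField f z‖ ≤ 1 := by
  rw [nsdField, norm_neg, norm_smul, norm_inv, Real.norm_of_nonneg (by positivity),
    inv_mul_le_iff₀ (by positivity)]
  linarith

theorem locallyLipschitz_nsdField (hf : ContDiff ℝ 2 f) : LocallyLipschitz (nsdField f) := by
  have hgrad : ContDiff ℝ 1 (gradient f) :=
    (InnerProductSpace.toDual ℝ X).symm.contDiff.comp (hf.fderiv_right (by norm_num))
  exact (lipschitzWith_inv_one_add_norm_smul.neg).locallyLipschitz.comp hgrad.locallyLipschitz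

namespace IsNSDFlow

theorem lipschitzWith_one (hη : IsNSDFlow f η) (x : X) : LipschitzWith 1 (η · x) :=
  lipschitzWith_of_nnnorm_deriv_le (fun t => (hη.2 x t).differentiableAt) fun t => by
    rw [(hη.2 x t).deriv, ← NNReal.coe_le_coe, coe_nnnorm, NNReal.coe_one]
    exact norm_nsdField_le f (η t x)

theorem antitone_comp (hf : Differentiable ℝ f) (hη : IsNSDFlow f η) (x : X) :
    Antitone (fun t => f (η t x)) := by
  refine antitone_of_hasDerivAt_nonpos
    (fun t => (hf (η t x)).hasGradientAt.hasFDerivAt.comp_hasDerivAt t (hη.2 x t)) fun t => ?_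
  simp only [InnerProductSpace.toDual_apply_apply, inner_neg_right, real_inner_smul_right,
    real_inner_self_eq_norm_sq, Pi.zero_apply, neg_nonpos]
  positivity

theorem mem_connectedComponentIn_sublevel (hf : Differentiable ℝ f) (hη : IsNSDFlow f η)
    {a : ℝ} {x y : X} {t₀ t₁ : ℝ} (ht : t₀ ≤ t₁)
    (h₀ : η t₀ x ∈ connectedComponentIn {z | f z < a} y) :
    η t₁ x ∈ connectedComponentIn {z | f z < a} y := by
  have hsub : (η · x) '' Icc t₀ t₁ ⊆ {z | f z < a} := by
    rintro _ ⟨u, hu, rfl⟩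
    exact (hη.antitone_comp hf x hu.1).trans_lt
      (connectedComponentIn_subset {z | f z < a} y h₀ :)
  rw [connectedComponentIn_eq h₀]
  exact (isPreconnected_Icc.image _ (hη.lipschitzWith_one x).continuous.continuousOn)
    |>.subset_connectedComponentIn ⟨t₀, left_mem_Icc.2 ht, rfl⟩ hsub ⟨t₁, right_mem_Icc.2 ht, rfl⟩

theorem continuous (hf : ContDiff ℝ 2 f) (hη : IsNSDFlow f η) {t : ℝ} (ht : 0 ≤ t) :
    Continuous (η t) := by
  refine continuous_iff_continuousAt.2 fun x₀ => Metric.continuousAt_iff.2 fun ε hε => ?_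
  obtain ⟨δ, hδ, L, hL⟩ := (locallyLipschitz_nsdField hf).exists_lipschitzOnWith_ball_of_isCompact
    ((isCompact_Icc (a := 0) (b := t)).image (hη.lipschitzWith_one x₀).continuous)
  set ε' := min ε δ
  have hε' : 0 < ε' := lt_min hε hδ
  refine ⟨ε' / (2 * Real.exp (L * t)), by positivity, fun y hy => ?_⟩
  have hρ : ε' / (2 * Real.exp (L * t)) * Real.exp (L * (t - 0)) = ε' / 2 := by
    rw [sub_zero]
    field_simp
  have := dist_le_of_trajectories_of_lipschitzOnWith_ball (f := (η · y)) (g := (η · x₀))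
    (fun u hu => hL _ ⟨u, Ico_subset_Icc_self hu, rfl⟩) (hη.2 y) (hη.2 x₀)
    (by simpa only [hη.1] using hy.le) (by linarith [min_le_right ε δ]) t ⟨ht, le_rfl⟩
  linarith [min_le_left ε δ]

theorem continuousOn_uncurry (hf : ContDiff ℝ 2 f) (hη : IsNSDFlow f η) :
    ContinuousOn (fun q : ℝ × X => η q.1 q.2) (Ici 0 ×ˢ univ) :=
  continuousOn_prod_of_continuousOn_lipschitzOnWith _ 1
    (fun _ ht => (hη.continuous hf ht).continuousOn)
    fun x _ => (hη.lipschitzWith_one x).lipschitzOnWith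

section Sublevel

variable {p : X} {ε r : ℝ}

theorem dist_le_of_sInf_entry_le (hf : Differentiable ℝ f) (hη : IsNSDFlow f η) (hε : 0 < ε)
    (hFr : connectedComponentIn {z | f z < f p + ε} p ⊆ ball p r) {x : X}
    (hx : p ∈ omegaLim η x) {τ : ℝ}
    (hτ : sInf {t | 0 ≤ t ∧ η t x ∈ connectedComponentIn {z | f z < f p + ε} p} ≤ τ) :
    dist (η τ x) p ≤ r :=
  closure_ball_subset_closedBall <| closure_mono hFr <|
    (hη.lipschitzWith_one x).continuous.mem_closure_of_sInf_entry_le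
      (fun _ _ ht => hη.mem_connectedComponentIn_sublevel hf ht)
      (exists_nonneg_mem_sublevel_component hf.continuous hε hx) hτ

theorem exists_forall_dist_le (hf : ContDiff ℝ 2 f) (hη : IsNSDFlow f η) (hε : 0 < ε)
    (hFr : connectedComponentIn {z | f z < f p + ε} p ⊆ ball p r) {K : Set X}
    (hK : IsCompact K) (hω : ∀ x ∈ K, p ∈ omegaLim η x) :
    ∃ M, 0 ≤ M ∧ ∀ x ∈ K, ∀ τ, M ≤ τ → dist (η τ x) p ≤ r := by
  have hfd : Differentiable ℝ f := hf.differentiable (by norm_num)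
  obtain ⟨M, hM, hMF⟩ := hK.exists_entry_time
    (isOpen_lt hfd.continuous continuous_const).connectedComponentIn
    (fun _ ht => hη.continuous hf ht) (fun _ _ _ ht => hη.mem_connectedComponentIn_sublevel hfd ht)
    fun x hx => exists_nonneg_mem_sublevel_component hfd.continuous hε (hω x hx)
  exact ⟨M, hM, fun x hx _ hτ =>
    (mem_ball.1 (hFr (hη.mem_connectedComponentIn_sublevel hfd hτ (hMF x hx)))).le⟩

end Sublevel

end IsNSDFlow

end Flow

section Homotopy

def unitClamp (a : ℝ) : ℝ := max 0 (min 1 a)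

theorem unitClamp_of_nonpos {a : ℝ} (h : a ≤ 0) : unitClamp a = 0 := by
  unfold unitClamp; grind

theorem unitClamp_of_one_le {a : ℝ} (h : 1 ≤ a) : unitClamp a = 1 := by
  unfold unitClamp; grind

theorem unitClamp_of_mem {a : ℝ} (h : a ∈ Icc (0 : ℝ) 1) : unitClamp a = a := by
  unfold unitClamp; grind

theorem unitClamp_mem (a : ℝ) : unitClamp a ∈ Icc (0 : ℝ) 1 := by
  unfold unitClamp; constructor <;> grind

theorem continuous_unitClamp : Continuous unitClamp := by
  unfold unitClamp; fun_prop

variable {E : Type*} [NormedAddCommGroup E] [NormedSpace ℝ E]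
  {φ : ℝ → E → E} {p : E} {S : Set E} {r : ℝ}

theorem smul_add_smul_mem_of_ball_subset (hr : 0 < r) (hball : ball p r ⊆ S) {q : E}
    (hq : q ∈ S) (hqp : dist q p ≤ r) {l : ℝ} (hl : l ∈ Icc (0 : ℝ) 1) :
    (1 - l) • q + l • p ∈ S := by
  rcases hl.1.eq_or_lt with rfl | hl0
  · simpa using hq
  apply hball
  have hdist : dist ((1 - l) • q + l • p) p = (1 - l) * dist q p := by
    rw [dist_eq_norm, dist_eq_norm, show (1 - l) • q + l • p - p = (1 - l) • (q - p) by module,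
      norm_smul, Real.norm_of_nonneg (by linarith [hl.2])]
  rw [mem_ball, hdist]
  nlinarith [hl.2, dist_nonneg (x := q) (y := p)]

/-- On `[0, 1/2]` the flow line of `x` up to time `τ`, on `[1/2, 1]` the segment from `φ τ x`
to `p`; the descending path `α_x` of the paper is `descentPath η x̄ (T x) x`. -/
def descentPath (φ : ℝ → E → E) (p : E) (τ : ℝ) (x : E) (u : ℝ) : E :=
  (1 - unitClamp (2 * u - 1)) • φ (τ * unitClamp (2 * u)) x + unitClamp (2 * u - 1) • p

theorem descentPath_of_le_half {τ u : ℝ} {x : E} (hu₀ : 0 ≤ u) (hu : u ≤ 1 / 2) :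
    descentPath φ p τ x u = φ (τ * (2 * u)) x := by
  rw [descentPath, unitClamp_of_nonpos (by linarith), unitClamp_of_mem ⟨by linarith, by linarith⟩]
  simp

theorem descentPath_of_half_le {τ u : ℝ} {x : E} (hu : 1 / 2 ≤ u) (hu₁ : u ≤ 1) :
    descentPath φ p τ x u = (1 - (2 * u - 1)) • φ τ x + (2 * u - 1) • p := by
  rw [descentPath, unitClamp_of_one_le (a := 2 * u) (by linarith),
    unitClamp_of_mem (a := 2 * u - 1) ⟨by linarith, by linarith⟩, mul_one]

theorem descentPath_eq_ite {τ u : ℝ} {x : E} (hu : u ∈ Icc (0 : ℝ) 1) :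
    descentPath φ p τ x u = if u ≤ 1 / 2 then φ (τ * (2 * u)) x
      else (1 - (2 * u - 1)) • φ τ x + (2 * u - 1) • p := by
  split_ifs with h
  · exact descentPath_of_le_half hu.1 h
  · exact descentPath_of_half_le (not_le.1 h).le hu.2

theorem descentPath_of_nonpos {τ u : ℝ} {x : E} (hu : u ≤ 0) :
    descentPath φ p τ x u = φ 0 x := by
  rw [descentPath, unitClamp_of_nonpos (by linarith), unitClamp_of_nonpos (by linarith)]
  simp

theorem descentPath_of_one_le {τ u : ℝ} {x : E} (hu : 1 ≤ u) : descentPath φ p τ x u = p := by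
  rw [descentPath, unitClamp_of_one_le (by linarith)]
  simp

theorem descentPath_mem (hφS : ∀ x ∈ S, ∀ t, 0 ≤ t → φ t x ∈ S) (hr : 0 < r)
    (hball : ball p r ⊆ S) {τ u : ℝ} {x : E} (hx : x ∈ S) (hτ : 0 ≤ τ)
    (h : u ≤ 1 / 2 ∨ dist (φ τ x) p ≤ r) : descentPath φ p τ x u ∈ S := by
  have hflow : φ (τ * unitClamp (2 * u)) x ∈ S := hφS x hx _ (mul_nonneg hτ (unitClamp_mem _).1)
  rcases le_or_gt u (1 / 2) with hu | hu
  · rw [descentPath, unitClamp_of_nonpos (by linarith)]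
    simpa using hflow
  · have hdist := h.resolve_left hu.not_ge
    rw [descentPath, unitClamp_of_one_le (a := 2 * u) (by linarith), mul_one]
    exact smul_add_smul_mem_of_ball_subset hr hball (hφS x hx τ hτ) hdist (unitClamp_mem _)

theorem ContinuousOn.descentPath {Z : Type*} [TopologicalSpace Z]
    (hφ : ContinuousOn (fun q : ℝ × E => φ q.1 q.2) (Ici 0 ×ˢ univ)) {s : Set Z}
    {τ u : Z → ℝ} {x : Z → E} (hτ : ContinuousOn τ s) (hx : ContinuousOn x s)
    (hu : ContinuousOn u s) (hτ₀ : ∀ z ∈ s, 0 ≤ τ z) :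
    ContinuousOn (fun z => _root_.descentPath φ p (τ z) (x z) (u z)) s := by
  have hc₁ : ContinuousOn (fun z => unitClamp (2 * u z - 1)) s :=
    continuous_unitClamp.comp_continuousOn (by fun_prop)
  have hc₂ : ContinuousOn (fun z => τ z * unitClamp (2 * u z)) s :=
    hτ.mul (continuous_unitClamp.comp_continuousOn (by fun_prop))
  have hflow : ContinuousOn (fun z => φ (τ z * unitClamp (2 * u z)) (x z)) s :=
    hφ.comp (hc₂.prodMk hx) fun z hz =>
      ⟨mul_nonneg (hτ₀ z hz) (unitClamp_mem _).1, mem_univ _⟩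
  exact ((continuousOn_const.sub hc₁).smul hflow).add (hc₁.smul continuousOn_const)

/-- At stage `l` the flow times have grown by `2 l M`; for `l ≥ 1/2` the descending paths are
shrunk to `p` as well. -/
def descentHomotopy (φ : ℝ → E → E) (p : E) (γ : ℝ → E) (T₀ T₁ M l s : ℝ) : E :=
  descentPath φ p (T₀ + unitClamp (4 * s - 1) * (T₁ - T₀) + 2 * l * M) (γ (unitClamp (4 * s - 1)))
    (max (2 * l - 1) (max (1 - 4 * s) (2 * s - 1)))

variable {γ : ℝ → E} {T₀ T₁ M : ℝ}

theorem descentHomotopy_zero (hφ₀ : ∀ x, φ 0 x = x) (s : ℝ) :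
    descentHomotopy φ p γ T₀ T₁ M 0 s =
      if s ≤ 1 / 4 then descentPath φ p T₀ (γ 0) (1 - 4 * s)
      else if s ≤ 1 / 2 then γ (4 * s - 1)
      else descentPath φ p T₁ (γ 1) (2 * s - 1) := by
  unfold descentHomotopy
  split_ifs with h₁ h₂
  · rw [unitClamp_of_nonpos (by linarith), max_eq_right (by grind), max_eq_left (by linarith)]
    ring_nf
  · rw [unitClamp_of_mem ⟨by linarith, by linarith⟩, descentPath_of_nonpos (by grind), hφ₀]
  · rw [unitClamp_of_one_le (by linarith), max_eq_right (by grind), max_eq_right (by linarith)]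
    ring_nf

theorem descentHomotopy_one (s : ℝ) : descentHomotopy φ p γ T₀ T₁ M 1 s = p :=
  descentPath_of_one_le (by norm_num)

theorem descentHomotopy_left (l : ℝ) : descentHomotopy φ p γ T₀ T₁ M l 0 = p :=
  descentPath_of_one_le (le_max_of_le_right (by norm_num))

theorem descentHomotopy_right (l : ℝ) : descentHomotopy φ p γ T₀ T₁ M l 1 = p :=
  descentPath_of_one_le (le_max_of_le_right (by norm_num))

theorem continuousOn_descentHomotopy
    (hφ : ContinuousOn (fun q : ℝ × E => φ q.1 q.2) (Ici 0 ×ˢ univ))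
    (hγ : ContinuousOn γ (Icc 0 1)) (hT₀ : 0 ≤ T₀) (hT₁ : 0 ≤ T₁) (hM : 0 ≤ M) :
    ContinuousOn (fun q : ℝ × ℝ => descentHomotopy φ p γ T₀ T₁ M q.1 q.2)
      (Icc 0 1 ×ˢ Icc 0 1) := by
  have hσ : Continuous fun q : ℝ × ℝ => unitClamp (4 * q.2 - 1) :=
    continuous_unitClamp.comp (by fun_prop)
  refine ContinuousOn.descentPath hφ (by fun_prop)
    (hγ.comp hσ.continuousOn fun _ _ => unitClamp_mem _) (by fun_prop) fun q hq => ?_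
  have hσmem := unitClamp_mem (4 * q.2 - 1)
  nlinarith [hσmem.1, hσmem.2, mul_nonneg hq.1.1 hM]

theorem descentHomotopy_mem (hφS : ∀ x ∈ S, ∀ t, 0 ≤ t → φ t x ∈ S) (hr : 0 < r)
    (hball : ball p r ⊆ S) (hγS : ∀ s ∈ Icc (0 : ℝ) 1, γ s ∈ S) (hT₀ : 0 ≤ T₀) (hT₁ : 0 ≤ T₁)
    (hM : 0 ≤ M) (h₀ : ∀ τ, T₀ ≤ τ → dist (φ τ (γ 0)) p ≤ r)
    (h₁ : ∀ τ, T₁ ≤ τ → dist (φ τ (γ 1)) p ≤ r)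
    (hMr : ∀ s ∈ Icc (0 : ℝ) 1, ∀ τ, M ≤ τ → dist (φ τ (γ s)) p ≤ r) {l : ℝ} (hl : 0 ≤ l)
    (s : ℝ) : descentHomotopy φ p γ T₀ T₁ M l s ∈ S := by
  unfold descentHomotopy
  set σ := unitClamp (4 * s - 1)
  have hσ := unitClamp_mem (4 * s - 1)
  have hbase : 0 ≤ T₀ + σ * (T₁ - T₀) := by nlinarith [hσ.1, hσ.2]
  have hlM : 0 ≤ l * M := mul_nonneg hl hM
  refine descentPath_mem hφS hr hball (hγS _ hσ) (by linarith) ?_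
  rcases le_or_gt (max (2 * l - 1) (max (1 - 4 * s) (2 * s - 1))) (1 / 2) with hu | hu
  · exact .inl hu
  right
  rcases lt_max_iff.1 hu with hl' | hs
  · exact hMr σ hσ _ (by nlinarith)
  rcases lt_max_iff.1 hs with hs | hs
  · have : σ = 0 := unitClamp_of_nonpos (by linarith)
    rw [this] at hbase ⊢
    exact h₀ _ (by linarith)
  · have : σ = 1 := unitClamp_of_one_le (by linarith)
    rw [this] at hbase ⊢
    exact h₁ _ (by linarith)

end Homotopy


theorem stmt17_general (f : X → ℝ) (hf : ContDiff ℝ 2 f) (η : ℝ → X → X)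
    (hη : IsNSDFlow f η)
    (c : ℝ) (xbar : X)
    (S : Set X) (hS : S = connectedComponentIn {x : X | f x < c} xbar)
    (ε : ℝ) (hε : 0 < ε)
    (F : Set X) (hF : F = connectedComponentIn {x : X | f x < f xbar + ε} xbar)
    (r : ℝ) (hr : 0 < r) (hFr : F ⊆ ball xbar r)
    (hcontr : ∀ x ∈ ball xbar r, ∀ l ∈ Icc (0:ℝ) 1, (1 - l) • x + l • xbar ∈ S)
    (T : X → ℝ) (hT : ∀ x₁ : X, T x₁ = sInf {t : ℝ | 0 ≤ t ∧ η t x₁ ∈ F})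
    (α : X → ℝ → X)
    (hα : ∀ (x₁ : X) (s : ℝ), α x₁ s =
      if s ≤ 1/2 then η (T x₁ * (2 * s)) x₁
      else (1 - (2 * s - 1)) • η (T x₁) x₁ + (2 * s - 1) • xbar)
    (γ : ℝ → X) (hγc : ContinuousOn γ (Icc 0 1))
    (hγS : ∀ s ∈ Icc (0:ℝ) 1, γ s ∈ S)
    (hγω : ∀ s ∈ Icc (0:ℝ) 1, omegaLim η (γ s) = {xbar})
    (L : ℝ → X)
    (hL : ∀ s : ℝ, L s =
      if s ≤ 1/4 then α (γ 0) (1 - 4 * s)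
      else if s ≤ 1/2 then γ (4 * s - 1)
      else α (γ 1) (2 * s - 1)) :
    ∃ h : ℝ → ℝ → X,
      ContinuousOn (fun p : ℝ × ℝ => h p.1 p.2) (Icc 0 1 ×ˢ Icc 0 1) ∧
      (∀ l ∈ Icc (0:ℝ) 1, ∀ s ∈ Icc (0:ℝ) 1, h l s ∈ S) ∧
      (∀ s ∈ Icc (0:ℝ) 1, h 0 s = L s) ∧
      (∀ s ∈ Icc (0:ℝ) 1, h 1 s = xbar) ∧
      ∀ l ∈ Icc (0:ℝ) 1, h l 0 = h l 1 := by
  have hfd : Differentiable ℝ f := hf.differentiable (by norm_num)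
  subst hF
  have hω : ∀ s ∈ Icc (0 : ℝ) 1, xbar ∈ omegaLim η (γ s) := fun s hs => by rw [hγω s hs]; rfl
  have hSinv : ∀ x ∈ S, ∀ t, 0 ≤ t → η t x ∈ S := fun x hx _ ht =>
    hS ▸ hη.mem_connectedComponentIn_sublevel hfd ht (by rwa [hη.1, ← hS])
  have hTr : ∀ s ∈ Icc (0 : ℝ) 1, ∀ τ, T (γ s) ≤ τ → dist (η τ (γ s)) xbar ≤ r :=
    fun s hs _ hτ => hη.dist_le_of_sInf_entry_le hfd hε hFr (hω s hs) (hT _ ▸ hτ)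
  obtain ⟨M, hM, hMr⟩ := hη.exists_forall_dist_le hf hε hFr
    (isCompact_Icc.image_of_continuousOn hγc) (forall_mem_image.2 hω)
  have hT₀ : ∀ x, 0 ≤ T x := fun x => hT x ▸ Real.sInf_nonneg fun _ ht => ht.1
  have hball : ball xbar r ⊆ S := fun x hx => by simpa using hcontr x hx 0 ⟨le_rfl, zero_le_one⟩
  have hαpath : ∀ x, ∀ u ∈ Icc (0 : ℝ) 1, α x u = descentPath η xbar (T x) x u := fun x u hu => by
    rw [hα, descentPath_eq_ite hu]
  refine ⟨descentHomotopy η xbar γ (T (γ 0)) (T (γ 1)) M,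
    continuousOn_descentHomotopy (hη.continuousOn_uncurry hf) hγc (hT₀ _) (hT₀ _) hM,
    fun l hl s _ => descentHomotopy_mem hSinv hr hball hγS (hT₀ _) (hT₀ _) hM
      (hTr 0 (left_mem_Icc.2 zero_le_one)) (hTr 1 (right_mem_Icc.2 zero_le_one))
      (fun s hs => hMr _ (mem_image_of_mem γ hs)) hl.1 s,
    fun s hs => ?_, fun s _ => descentHomotopy_one s,
    fun l _ => (descentHomotopy_left l).trans (descentHomotopy_right l).symm⟩
  rw [hL, descentHomotopy_zero hη.1]
  split_ifs with h₁ h₂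
  · rw [hαpath _ _ ⟨by linarith, by linarith [hs.1]⟩]
  · rfl
  · rw [hαpath _ _ ⟨by linarith, by linarith [hs.2]⟩]

theorem stmt17 (f : X → ℝ) (hf : ContDiff ℝ 2 f) (η : ℝ → X → X)
    (hη : IsNSDFlow f η)
    (c : ℝ) (xbar : X) (hxbarc : f xbar < c) (hmin : StrictLocalMin f xbar)
    (S : Set X) (hS : S = connectedComponentIn {x : X | f x < c} xbar)
    (ε : ℝ) (hε : 0 < ε)
    (F : Set X) (hF : F = connectedComponentIn {x : X | f x < f xbar + ε} xbar)
    (r : ℝ) (hr : 0 < r) (hFr : F ⊆ ball xbar r)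
    (hcontr : ∀ x ∈ ball xbar r, ∀ l ∈ Icc (0:ℝ) 1, (1 - l) • x + l • xbar ∈ S)
    (T : X → ℝ) (hT : ∀ x₁ : X, T x₁ = sInf {t : ℝ | 0 ≤ t ∧ η t x₁ ∈ F})
    (α : X → ℝ → X)
    (hα : ∀ (x₁ : X) (s : ℝ), α x₁ s =
      if s ≤ 1/2 then η (T x₁ * (2 * s)) x₁
      else (1 - (2 * s - 1)) • η (T x₁) x₁ + (2 * s - 1) • xbar)
    (γ : ℝ → X) (hγc : ContinuousOn γ (Icc 0 1))
    (hγS : ∀ s ∈ Icc (0:ℝ) 1, γ s ∈ S)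
    (hγω : ∀ s ∈ Icc (0:ℝ) 1, omegaLim η (γ s) = {xbar})
    (L : ℝ → X)
    (hL : ∀ s : ℝ, L s =
      if s ≤ 1/4 then α (γ 0) (1 - 4 * s)
      else if s ≤ 1/2 then γ (4 * s - 1)
      else α (γ 1) (2 * s - 1)) :
    ∃ h : ℝ → ℝ → X,
      ContinuousOn (fun p : ℝ × ℝ => h p.1 p.2) (Icc 0 1 ×ˢ Icc 0 1) ∧
      (∀ l ∈ Icc (0:ℝ) 1, ∀ s ∈ Icc (0:ℝ) 1, h l s ∈ S) ∧
      (∀ s ∈ Icc (0:ℝ) 1, h 0 s = L s) ∧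
      (∀ s ∈ Icc (0:ℝ) 1, h 1 s = xbar) ∧
      ∀ l ∈ Icc (0:ℝ) 1, h l 0 = h l 1 :=
  stmt17_general f hf η hη c xbar S hS ε hε F hF r hr hFr hcontr T hT α hα γ hγc hγS hγω L hL
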